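/- arXiv:2511.06617 — 2 statements merged into one kernel-verified Lean document; each statement's English description precedes it below -/
import Mathlib

section
/- For every binary word w, the maximum hexagonal-lattice fold score satisfies J_hex(w) ≤ Z(w)/2 + 1, i.e., 2·J_hex(w) ≤ Z(w) + 2, where Z(w) is the number of zeros in w. -/
/-- L¹ distance on ℤ². -/
def d2 (p q : ℤ × ℤ) : ℕ := (p.1 - q.1).natAbs + (p.2 - q.2).natAbs

/-- Adjacency in the 2D rectangular lattice. -/
def adj2 (p q : ℤ × ℤ) : Prop := d2 p q = 1

/-- Adjacency in the hexagonal (3-regular, brick-wall) lattice. -/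
def hexAdj (p q : ℤ × ℤ) : Prop :=
  (p.2 = q.2 ∧ (p.1 - q.1).natAbs = 1) ∨
  (p.1 = q.1 ∧ ((q.2 = p.2 + 1 ∧ (p.1 + p.2) % 2 = 0) ∨ (p.2 = q.2 + 1 ∧ (q.1 + q.2) % 2 = 0)))

/-- A fold (self-avoiding walk) of a binary word `w` on a lattice with adjacency `A`:
letters `false` = hydrophobic (0), `true` = polar (1). -/
def IsFold (A : ℤ × ℤ → ℤ × ℤ → Prop) (w : List Bool) (F : Fin w.length → ℤ × ℤ) : Prop :=
  Function.Injective F ∧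
    ∀ (i : ℕ) (h : i + 1 < w.length), A (F ⟨i, by omega⟩) (F ⟨i + 1, h⟩)

/-- The score of a fold: the number of (unordered) pairs of non-consecutive positions,
both labeled 0, whose images are adjacent. -/
noncomputable def score (A : ℤ × ℤ → ℤ × ℤ → Prop) (w : List Bool) (F : Fin w.length → ℤ × ℤ) : ℕ :=
  Set.ncard {p : Fin w.length × Fin w.length |
    p.1.1 + 2 ≤ p.2.1 ∧ w.get p.1 = false ∧ w.get p.2 = false ∧ A (F p.1) (F p.2)}

/-- The optimal score over all folds of `w`. -/
noncomputable def J (A : ℤ × ℤ → ℤ × ℤ → Prop) (w : List Bool) : ℕ :=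
  sSup {s | ∃ F, IsFold A w F ∧ score A w F = s}

/-!
Every vertex of the hexagonal lattice has three neighbours, and the chain of a fold already
occupies two of them at an interior position and one at an end. So an interior `0` takes part
in at most one contact and an end `0` in at most two; since every contact is seen from both of
its positions, `2 · score ≤ Z + 2`. The same count gives `2 · score ≤ k · Z + 2` for any
symmetric lattice of degree at most `k + 2`.
-/

open Finset

def chainNeighbors {n : ℕ} (i : Fin n) : Finset (Fin n) :=
  {j | i.1 + 1 = j.1 ∨ j.1 + 1 = i.1}

-- The two end indicators are added separately so that for `n = 1` the single position counts
-- as both ends, which it must since it has no chain neighbours.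
theorem two_le_card_chainNeighbors_add {n : ℕ} (i : Fin n) :
    2 ≤ #(chainNeighbors i) + ((if i.1 = 0 then 1 else 0) + if i.1 + 1 = n then 1 else 0) := by
  have hdisj :
      Disjoint ({j : Fin n | i.1 + 1 = j.1} : Finset _) ({j : Fin n | j.1 + 1 = i.1} : Finset _) :=
    disjoint_filter.mpr fun _ _ h => by omega
  have hsucc : 1 ≤ #({j | i.1 + 1 = j.1} : Finset (Fin n)) + if i.1 + 1 = n then 1 else 0 := by
    split_ifs with h
    · omega
    · rw [Nat.add_zero]
      exact card_pos.mpr ⟨⟨i.1 + 1, by omega⟩, by simp⟩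
  have hpred : 1 ≤ #({j | j.1 + 1 = i.1} : Finset (Fin n)) + if i.1 = 0 then 1 else 0 := by
    split_ifs with h
    · omega
    · rw [Nat.add_zero]
      refine card_pos.mpr ⟨⟨i.1 - 1, by omega⟩, ?_⟩
      simp only [mem_filter, mem_univ, true_and]
      omega
  rw [chainNeighbors, filter_or, card_union_of_disjoint hdisj]
  omega

theorem sum_endpoint_indicators_le_two (n : ℕ) :
    ∑ i : Fin n, ((if i.1 = 0 then 1 else 0) + if i.1 + 1 = n then 1 else 0) ≤ 2 := by
  rw [sum_add_distrib, sum_boole, sum_boole]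
  have hfirst : #({i : Fin n | i.1 = 0} : Finset _) ≤ 1 :=
    card_le_one.mpr fun a ha b hb => Fin.ext <| by
      simp only [mem_filter, mem_univ, true_and] at ha hb
      omega
  have hlast : #({i : Fin n | i.1 + 1 = n} : Finset _) ≤ 1 :=
    card_le_one.mpr fun a ha b hb => Fin.ext <| by
      simp only [mem_filter, mem_univ, true_and] at ha hb
      omega
  simp only [Nat.cast_id]
  omega

theorem card_filter_comp_le_encard {α β : Type*} [Fintype α] {f : α → β}
    (hf : Function.Injective f) (p : β → Prop) [DecidablePred fun a => p (f a)] :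
    (#{a | p (f a)} : ℕ∞) ≤ {b | p b}.encard := by
  classical
  rw [← card_image_of_injective _ hf, ← Set.encard_coe_eq_coe_finsetCard]
  exact Set.encard_le_encard (by simp [Set.subset_def])

section Folds

variable {A : ℤ × ℤ → ℤ × ℤ → Prop} {w : List Bool} {F : Fin w.length → ℤ × ℤ}

def IsContact (A : ℤ × ℤ → ℤ × ℤ → Prop) (w : List Bool)
    (F : Fin w.length → ℤ × ℤ) (i j : Fin w.length) : Prop :=
  i.1 + 2 ≤ j.1 ∧ w.get i = false ∧ w.get j = false ∧ A (F i) (F j)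

open Classical in
noncomputable def contacts (A : ℤ × ℤ → ℤ × ℤ → Prop) (w : List Bool)
    (F : Fin w.length → ℤ × ℤ) (i : Fin w.length) : Finset (Fin w.length) :=
  {j | IsContact A w F i j ∨ IsContact A w F j i}

theorem two_mul_score_eq_sum_card_contacts :
    2 * score A w F = ∑ i, #(contacts A w F i) := by
  classical
  have hscore : score A w F = ∑ i, ∑ j, if IsContact A w F i j then 1 else 0 := by
    rw [score, Set.ncard_eq_toFinset_card', Set.toFinset_ofPred, Finset.card_filter,
      Fintype.sum_prod_type]
    congr!
  have hcard : ∀ i, #(contacts A w F i) = ∑ j,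
      ((if IsContact A w F i j then 1 else 0) + if IsContact A w F j i then 1 else 0) := by
    intro i
    rw [contacts, Finset.card_filter]
    refine Finset.sum_congr rfl fun j _ => ?_
    have : ¬ (IsContact A w F i j ∧ IsContact A w F j i) := fun ⟨h1, h2⟩ => by
      have := h1.1; have := h2.1; omega
    split_ifs <;> tauto
  rw [two_mul, hscore]
  nth_rw 2 [Finset.sum_comm]
  rw [← Finset.sum_add_distrib]
  simp_rw [hcard, Finset.sum_add_distrib]

theorem IsFold.adj_of_val_add_one_eq (hF : IsFold A w F) {i j : Fin w.length}
    (h : i.1 + 1 = j.1) : A (F i) (F j) := by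
  have hj : (⟨i.1 + 1, h ▸ j.2⟩ : Fin w.length) = j := Fin.ext h
  exact hj ▸ hF.2 i.1 _

theorem card_contacts_add_card_chainNeighbors_le {k : ℕ} [Std.Symm A]
    (hdeg : ∀ p, {q | A p q}.encard ≤ k + 2) (hF : IsFold A w F) (i : Fin w.length) :
    #(contacts A w F i) + #(chainNeighbors i) ≤ k + 2 := by
  classical
  have hdisj : Disjoint (contacts A w F i) (chainNeighbors i) := by
    refine disjoint_filter.mpr fun j _ hc hn => ?_
    rcases hc with ⟨h, -⟩ | ⟨h, -⟩ <;> omega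
  have hsub : contacts A w F i ∪ chainNeighbors i ⊆ ({j | A (F i) (F j)} : Finset _) := by
    intro j hj
    simp only [mem_union, contacts, chainNeighbors, mem_filter, mem_univ, true_and] at hj
    simp only [mem_filter, mem_univ, true_and]
    rcases hj with (h | h) | h | h
    · exact h.2.2.2
    · exact symm_of A h.2.2.2
    · exact hF.adj_of_val_add_one_eq h
    · exact symm_of A (hF.adj_of_val_add_one_eq h)
  rw [← card_union_of_disjoint hdisj]
  have hnbhd := (card_filter_comp_le_encard hF.1 (A (F i))).trans (hdeg (F i))
  exact (card_le_card hsub).trans (mod_cast hnbhd)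

theorem card_contacts_le {k : ℕ} [Std.Symm A] (hdeg : ∀ p, {q | A p q}.encard ≤ k + 2)
    (hF : IsFold A w F) (i : Fin w.length) :
    #(contacts A w F i) ≤ (if w.get i = false then k else 0) +
      ((if i.1 = 0 then 1 else 0) + if i.1 + 1 = w.length then 1 else 0) := by
  by_cases hi : w.get i = false
  · have := card_contacts_add_card_chainNeighbors_le hdeg hF i
    have := two_le_card_chainNeighbors_add i
    rw [if_pos hi]
    omega
  · have : contacts A w F i = ∅ := by
      classical
      refine filter_eq_empty_iff.mpr ?_
      rintro j - (h | h)
      exacts [hi h.2.1, hi h.2.2.1]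
    simp [this]

theorem two_mul_score_le {k : ℕ} [Std.Symm A] (hdeg : ∀ p, {q | A p q}.encard ≤ k + 2)
    (hF : IsFold A w F) : 2 * score A w F ≤ k * w.count false + 2 := by
  have hzeros : #{i : Fin w.length | w.get i = false} = w.count false :=
    Fin.card_filter_univ_eq_vector_get_eq_count false ⟨w, rfl⟩
  calc 2 * score A w F = ∑ i, #(contacts A w F i) := two_mul_score_eq_sum_card_contacts
    _ ≤ ∑ i : Fin w.length, ((if w.get i = false then k else 0) +
          ((if i.1 = 0 then 1 else 0) + if i.1 + 1 = w.length then 1 else 0)) :=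
        sum_le_sum fun i _ => card_contacts_le hdeg hF i
    _ = k * w.count false + ∑ i : Fin w.length,
          ((if i.1 = 0 then 1 else 0) + if i.1 + 1 = w.length then 1 else 0) := by
        rw [sum_add_distrib, sum_ite, sum_const_zero, sum_const, smul_eq_mul, hzeros, add_zero,
          mul_comm]
    _ ≤ k * w.count false + 2 := Nat.add_le_add_left (sum_endpoint_indicators_le_two _) _

theorem J_le_of_forall_score_le {b : ℕ} (h : ∀ F, IsFold A w F → score A w F ≤ b) :
    J A w ≤ b :=
  csSup_le' <| by
    rintro _ ⟨F, hF, rfl⟩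
    exact h F hF

theorem two_mul_J_le {k : ℕ} [Std.Symm A] (hdeg : ∀ p, {q | A p q}.encard ≤ k + 2) :
    2 * J A w ≤ k * w.count false + 2 := by
  have : J A w ≤ (k * w.count false + 2) / 2 :=
    J_le_of_forall_score_le fun F hF => by
      have := two_mul_score_le hdeg hF
      omega
  omega

end Folds

instance : Std.Symm hexAdj where
  symm p q := by
    rintro (⟨h2, h1⟩ | ⟨h1, h | h⟩)
    · exact Or.inl ⟨h2.symm, by omega⟩
    · exact Or.inr ⟨h1.symm, Or.inr h⟩
    · exact Or.inr ⟨h1.symm, Or.inl h⟩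

def hexNeighbors (p : ℤ × ℤ) : Finset (ℤ × ℤ) :=
  {(p.1 - 1, p.2), (p.1 + 1, p.2), (p.1, if (p.1 + p.2) % 2 = 0 then p.2 + 1 else p.2 - 1)}

theorem setOf_hexAdj_subset_hexNeighbors (p : ℤ × ℤ) :
    {q | hexAdj p q} ⊆ hexNeighbors p := by
  rintro q (⟨h2, h1⟩ | ⟨h1, ⟨h2, h3⟩ | ⟨h2, h3⟩⟩) <;>
    simp only [hexNeighbors, coe_insert, coe_singleton, Set.mem_insert_iff,
      Set.mem_singleton_iff, Prod.ext_iff] <;>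
    split <;> omega

theorem encard_setOf_hexAdj_le (p : ℤ × ℤ) : {q | hexAdj p q}.encard ≤ 3 :=
  calc {q | hexAdj p q}.encard ≤ (hexNeighbors p : Set (ℤ × ℤ)).encard :=
        Set.encard_le_encard (setOf_hexAdj_subset_hexNeighbors p)
    _ ≤ 3 := by
        rw [Set.encard_coe_eq_coe_finsetCard]
        exact_mod_cast card_le_three

/-- For every binary word `w`, the optimal hexagonal-lattice fold score satisfies
`J_hex(w) ≤ Z(w)/2 + 1`, i.e. `2 J_hex(w) ≤ Z(w) + 2`. -/
theorem stmt6 (w : List Bool) : 2 * J hexAdj w ≤ w.count false + 2 := by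
  simpa using two_mul_J_le (w := w) (k := 1) fun p => (encard_setOf_hexAdj_le p).trans (by norm_num)
end

section
/- For each k ≥ 1, the word w_k = 0 1111 011 (01)^k 11 (10)^k over {0,1} satisfies J_hex(w_k) = Z(w_k)/2 + 1, where Z(w_k) = 2k+2 is the number of zeros; that is, there is a fold in the hexagonal lattice achieving score k+2, and no fold achieves more. -/
/- ### Auxiliary geometry -/

lemma hexAdj_symm {p q : ℤ × ℤ} (h : hexAdj p q) : hexAdj q p := by
  unfold hexAdj at *; omega

lemma hex_nbr {x y : ℤ × ℤ} (h : hexAdj x y) :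
    y = (x.1 - 1, x.2) ∨ y = (x.1 + 1, x.2) ∨
      y = (x.1, if (x.1 + x.2) % 2 = 0 then x.2 + 1 else x.2 - 1) := by
  obtain ⟨x1, x2⟩ := x; obtain ⟨y1, y2⟩ := y
  simp only [hexAdj, Prod.mk.injEq] at *
  split_ifs <;> omega

lemma hex_key3 {x a b c d : ℤ × ℤ}
    (ha : hexAdj x a) (hb : hexAdj x b) (hc : hexAdj x c) (hd : hexAdj x d)
    (h1 : a ≠ b) (h2 : a ≠ c) (h3 : a ≠ d) (h4 : b ≠ c) (h5 : b ≠ d) (h6 : c ≠ d) : False := by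
  rcases hex_nbr ha with rfl | rfl | rfl <;> rcases hex_nbr hb with rfl | rfl | rfl <;>
    rcases hex_nbr hc with rfl | rfl | rfl <;> rcases hex_nbr hd with rfl | rfl | rfl <;>
      first | exact h1 rfl | exact h2 rfl | exact h3 rfl | exact h4 rfl | exact h5 rfl | exact h6 rfl

/- ### The word -/

def wk (k : ℕ) : List Bool :=
  [false] ++ List.replicate 4 true ++ [false, true, true] ++
    (List.replicate k [false, true]).flatten ++ [true, true] ++
    (List.replicate k [true, false]).flatten

lemma flat_len (m : ℕ) (a b : Bool) : ((List.replicate m [a, b]).flatten).length = 2 * m := by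
  induction m with
  | zero => simp
  | succ p ih => simp [List.replicate_succ, ih]; omega

lemma flat_get (m : ℕ) (a b : Bool) (i : ℕ) (h : i < ((List.replicate m [a, b]).flatten).length) :
    ((List.replicate m [a, b]).flatten)[i] = if i % 2 = 0 then a else b := by
  induction m generalizing i with
  | zero => simp at h
  | succ p ih =>
    simp only [List.replicate_succ, List.flatten_cons] at h ⊢
    rcases Nat.lt_or_ge i 2 with h2 | h2
    · interval_cases i <;> simp
    · rw [List.getElem_append_right (by simp; omega)]
      rw [ih]
      show (if (i - 2) % 2 = 0 then a else b) = _
      have e : (i - 2) % 2 = i % 2 := by omega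
      rw [e]

lemma flat_count (m : ℕ) : ((List.replicate m [false, true]).flatten).count false = m := by
  induction m with
  | zero => simp
  | succ p ih =>
    rw [List.replicate_succ, List.flatten_cons, List.count_append, ih]
    have : List.count false [false, true] = 1 := by decide
    omega

lemma flat_count' (m : ℕ) : ((List.replicate m [true, false]).flatten).count false = m := by
  induction m with
  | zero => simp
  | succ p ih =>
    rw [List.replicate_succ, List.flatten_cons, List.count_append, ih]
    have : List.count false [true, false] = 1 := by decide
    omega

lemma wk_length (k : ℕ) : (wk k).length = 4 * k + 10 := by
  simp [wk, flat_len]; omega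

lemma wk_count (k : ℕ) : (wk k).count false = 2 * k + 2 := by
  simp only [wk, List.count_append, flat_count, flat_count']
  have h1 : List.count false [false] = 1 := by decide
  have h2 : List.count false (List.replicate 4 true) = 0 := by decide
  have h3 : List.count false [false, true, true] = 1 := by decide
  have h4 : List.count false [true, true] = 0 := by decide
  omega

lemma wk_get0 (k : ℕ) (h : 0 < (wk k).length) : (wk k)[0] = false := rfl

lemma wk_get5 (k : ℕ) (h : 5 < (wk k).length) : (wk k)[5] = false := rfl

lemma wk_get_hi (k i : ℕ) (h : i < (wk k).length)
    (hB : (8 ≤ i ∧ i < 2*k+8 ∧ i % 2 = 0) ∨ (2*k+10 ≤ i ∧ i < 4*k+10 ∧ i % 2 = 1)) :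
    (wk k)[i] = false := by
  have hlen := wk_length k
  unfold wk at h ⊢
  rcases hB with ⟨h8, hlt, hpar⟩ | ⟨h8, hlt, hpar⟩
  · rw [List.getElem_append_left (by simp [flat_len]; omega),
        List.getElem_append_left (by simp [flat_len]; omega),
        List.getElem_append_right (by simp; omega),
        flat_get, if_pos (by simp; omega)]
  · rw [List.getElem_append_right (by simp [flat_len]; omega),
        flat_get, if_neg (by simp [flat_len]; omega)]

lemma card_filter_count (l : List Bool) :
    (Finset.univ.filter fun i : Fin l.length => l.get i = false).card = l.count false := by
  induction l with
  | nil => simp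
  | cons a t ih =>
    rw [Finset.card_filter]
    simp only [List.length_cons]
    rw [Fin.sum_univ_succ, List.count_cons, ← ih, Finset.card_filter]
    have e1 : ∀ i : Fin t.length, ((a :: t).get i.succ) = t.get i := fun i => rfl
    simp only [e1]
    have e2 : (a :: t).get (0 : Fin (t.length + 1)) = a := rfl
    rw [e2]
    cases a <;> simp <;> omega

/- ### The fold -/

def fold (k i : ℕ) : ℤ × ℤ :=
  match i with
  | 0 => (-1, 1) | 1 => (-1, 2) | 2 => (-2, 2) | 3 => (-3, 2)
  | 4 => (-3, 1) | 5 => (-2, 1) | 6 => (-2, 0) | 7 => (-1, 0)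
  | (i + 8) => if i + 8 ≤ 2*k+8 then ((i : ℤ), 0) else (4*(k : ℤ) + 1 - (i : ℤ), 1)

lemma fold_inj (k : ℕ) : ∀ i j, i < 4*k+10 → j < 4*k+10 → fold k i = fold k j → i = j := by
  intro i j hi hj hij
  rcases Nat.lt_or_ge i 8 with h1 | h1 <;> rcases Nat.lt_or_ge j 8 with h2 | h2
  · interval_cases i <;> interval_cases j <;> simp_all [fold]
  · obtain ⟨j', rfl⟩ : ∃ t, j = t + 8 := ⟨j - 8, by omega⟩
    interval_cases i <;> simp only [fold] at hij <;> split_ifs at hij <;>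
      simp only [Prod.mk.injEq] at hij <;> omega
  · obtain ⟨i', rfl⟩ : ∃ t, i = t + 8 := ⟨i - 8, by omega⟩
    interval_cases j <;> simp only [fold] at hij <;> split_ifs at hij <;>
      simp only [Prod.mk.injEq] at hij <;> omega
  · obtain ⟨i', rfl⟩ : ∃ t, i = t + 8 := ⟨i - 8, by omega⟩
    obtain ⟨j', rfl⟩ : ∃ t, j = t + 8 := ⟨j - 8, by omega⟩
    simp only [fold] at hij
    split_ifs at hij <;> simp only [Prod.mk.injEq] at hij <;> omega

lemma fold_adj (k : ℕ) : ∀ i, i + 1 < 4*k+10 → hexAdj (fold k i) (fold k (i+1)) := by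
  intro i h
  rcases Nat.lt_or_ge i 8 with h1 | h1
  · interval_cases i <;> (simp [fold, hexAdj]; try omega)
  · obtain ⟨i', rfl⟩ : ∃ t, i = t + 8 := ⟨i - 8, by omega⟩
    have e : i' + 8 + 1 = (i' + 1) + 8 := by omega
    rw [e]
    simp only [fold]
    split_ifs <;> (simp [hexAdj]; try omega)

lemma fold_0 (k : ℕ) : fold k 0 = (-1, 1) := rfl

lemma fold_5 (k : ℕ) : fold k 5 = (-2, 1) := rfl

lemma fold_B1 (k j : ℕ) (hj : j < k) : fold k (8 + 2*j) = (2*(j:ℤ), 0) := by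
  have e : 8 + 2*j = 2*j + 8 := by omega
  rw [e]
  simp only [fold]
  rw [if_pos (by omega)]
  simp only [Prod.mk.injEq]
  exact ⟨by push_cast; ring, trivial⟩

lemma fold_B2 (k j : ℕ) (hj : j < k) : fold k (4*k + 9 - 2*j) = (2*(j:ℤ), 1) := by
  have e : 4*k + 9 - 2*j = (4*k + 1 - 2*j) + 8 := by omega
  rw [e]
  simp only [fold]
  rw [if_neg (by omega)]
  simp only [Prod.mk.injEq]
  exact ⟨by omega, trivial⟩

lemma fold_end (k : ℕ) : fold k (4*k + 9) = (0, 1) := by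
  have e : 4*k + 9 = (4*k + 1) + 8 := by omega
  rw [e]
  simp only [fold]
  rw [if_neg (by omega)]
  simp only [Prod.mk.injEq]
  exact ⟨by omega, trivial⟩

/- ### Lower bound -/

lemma wk_lower (k : ℕ) (hk : 1 ≤ k) :
    ∃ F : Fin (wk k).length → ℤ × ℤ, IsFold hexAdj (wk k) F ∧ k + 2 ≤ score hexAdj (wk k) F := by
  classical
  have hlen := wk_length k
  refine ⟨fun i => fold k i.1, ⟨?_, ?_⟩, ?_⟩
  · intro a b hab
    exact Fin.ext (fold_inj k a.1 b.1 (by have := a.2; omega) (by have := b.2; omega) hab)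
  · intro i h
    exact fold_adj k i (by omega)
  · rw [score]
    set S : Set (Fin (wk k).length × Fin (wk k).length) :=
      {p : Fin (wk k).length × Fin (wk k).length |
        p.1.1 + 2 ≤ p.2.1 ∧ (wk k).get p.1 = false ∧ (wk k).get p.2 = false ∧
          hexAdj ((fun i : Fin (wk k).length => fold k i.1) p.1)
            ((fun i : Fin (wk k).length => fold k i.1) p.2)} with hS
    have hfin : S.Finite := Set.toFinite _
    rw [Set.ncard_eq_toFinset_card _ hfin]
    have hcard : (Finset.univ : Finset (Fin (k+2))).card = k + 2 := by simp
    rw [← hcard]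
    set g : Fin (k+2) → Fin (wk k).length × Fin (wk k).length := fun i =>
      if i.1 = 0 then (⟨0, by omega⟩, ⟨5, by omega⟩)
      else if i.1 = 1 then (⟨0, by omega⟩, ⟨4*k+9, by omega⟩)
      else (⟨8 + 2*(i.1-2), by have := i.2; omega⟩, ⟨4*k+9 - 2*(i.1-2), by omega⟩) with hg
    apply Finset.card_le_card_of_injOn g
    · intro i _
      rw [Finset.mem_coe, Set.Finite.mem_toFinset, hS]
      simp only [hg]
      split_ifs with h0 h1 <;> simp only [Set.mem_setOf_eq] <;> try dsimp only
      · refine ⟨by omega, ?_, ?_, ?_⟩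
        · rw [List.get_eq_getElem]
          exact wk_get0 k (by omega)
        · rw [List.get_eq_getElem]
          exact wk_get5 k (by omega)
        · show hexAdj (fold k 0) (fold k 5)
          rw [fold_0, fold_5]
          exact Or.inl ⟨rfl, by decide⟩
      · refine ⟨by omega, ?_, ?_, ?_⟩
        · rw [List.get_eq_getElem]
          exact wk_get0 k (by omega)
        · rw [List.get_eq_getElem]
          exact wk_get_hi k (4*k+9) (by omega) (Or.inr ⟨by omega, by omega, by omega⟩)
        · show hexAdj (fold k 0) (fold k (4*k+9))
          rw [fold_0, fold_end]
          exact Or.inl ⟨rfl, by decide⟩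
      · have hik : i.1 - 2 < k := by have := i.2; omega
        refine ⟨by omega, ?_, ?_, ?_⟩
        · rw [List.get_eq_getElem]
          exact wk_get_hi k (8 + 2*(i.1-2)) (by omega) (Or.inl ⟨by omega, by omega, by omega⟩)
        · rw [List.get_eq_getElem]
          exact wk_get_hi k (4*k+9 - 2*(i.1-2)) (by omega) (Or.inr ⟨by omega, by omega, by omega⟩)
        · show hexAdj (fold k (8 + 2*(i.1-2))) (fold k (4*k+9 - 2*(i.1-2)))
          rw [fold_B1 k _ hik, fold_B2 k _ hik]
          refine Or.inr ⟨rfl, Or.inl ⟨rfl, ?_⟩⟩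
          show (2*((i.1-2 : ℕ):ℤ) + 0) % 2 = 0
          omega
    · intro i _ j _ hij
      have hi2 := i.2
      have hj2 := j.2
      simp only [hg] at hij
      split_ifs at hij <;>
        simp only [Prod.mk.injEq, Fin.mk.injEq] at hij <;>
        exact Fin.ext (by omega)

/- ### Upper bound -/

lemma wk_upper (k : ℕ) (F : Fin (wk k).length → ℤ × ℤ) (hF : IsFold hexAdj (wk k) F) :
    score hexAdj (wk k) F ≤ k + 2 := by
  classical
  obtain ⟨hinj, hadj⟩ := hF
  have hlen := wk_length k
  rw [score]
  set S : Set (Fin (wk k).length × Fin (wk k).length) :=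
    {p | p.1.1 + 2 ≤ p.2.1 ∧ (wk k).get p.1 = false ∧ (wk k).get p.2 = false ∧
      hexAdj (F p.1) (F p.2)} with hS
  have hfin : S.Finite := Set.toFinite _
  rw [Set.ncard_eq_toFinset_card _ hfin]
  set T := hfin.toFinset with hT
  have hmemT : ∀ p, p ∈ T ↔ (p.1.1 + 2 ≤ p.2.1 ∧ (wk k).get p.1 = false ∧
      (wk k).get p.2 = false ∧ hexAdj (F p.1) (F p.2)) := by
    intro p
    rw [hT, Set.Finite.mem_toFinset, hS]
    rfl
  have fne : ∀ x y : Fin (wk k).length, x.1 ≠ y.1 → x ≠ y :=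
    fun x y h e => h (congrArg Fin.val e)
  have chainF : ∀ a b : Fin (wk k).length, a.1 + 1 = b.1 → hexAdj (F a) (F b) := by
    intro a b hab
    have hb := b.2
    have h := hadj a.1 (by omega)
    have eb : (⟨a.1 + 1, by omega⟩ : Fin (wk k).length) = b := Fin.ext hab
    exact Eq.mp (congrArg (fun z : Fin (wk k).length => hexAdj (F a) (F z)) eb) h
  have no4 : ∀ v a b c d : Fin (wk k).length,
      hexAdj (F v) (F a) → hexAdj (F v) (F b) → hexAdj (F v) (F c) → hexAdj (F v) (F d) →
      a ≠ b → a ≠ c → a ≠ d → b ≠ c → b ≠ d → c ≠ d → False := by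
    intro v a b c d ha hb hc hd h1 h2 h3 h4 h5 h6
    exact hex_key3 ha hb hc hd (fun e => h1 (hinj e)) (fun e => h2 (hinj e))
      (fun e => h3 (hinj e)) (fun e => h4 (hinj e)) (fun e => h5 (hinj e)) (fun e => h6 (hinj e))
  have hdeg_int : ∀ v : Fin (wk k).length, 0 < v.1 → v.1 + 1 < (wk k).length →
      (T.filter fun p => p.1 = v ∨ p.2 = v).card ≤ 1 := by
    intro v h0 h1
    rw [Finset.card_le_one]
    intro p hp q hq
    rw [Finset.mem_filter, hmemT] at hp hq
    obtain ⟨⟨hp1, _, _, hp4⟩, hp5⟩ := hp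
    obtain ⟨⟨hq1, _, _, hq4⟩, hq5⟩ := hq
    by_contra hne
    have main : ∀ c d : Fin (wk k).length,
        (v.1 + 2 ≤ c.1 ∨ c.1 + 2 ≤ v.1) → (v.1 + 2 ≤ d.1 ∨ d.1 + 2 ≤ v.1) → c ≠ d →
        hexAdj (F v) (F c) → hexAdj (F v) (F d) → False := by
      intro c d hc hd hcd hfc hfd
      have a1' : hexAdj (F v) (F ⟨v.1 - 1, by omega⟩) :=
        hexAdj_symm (chainF ⟨v.1 - 1, by omega⟩ v (show v.1 - 1 + 1 = v.1 by omega))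
      have a2 : hexAdj (F v) (F ⟨v.1 + 1, h1⟩) := chainF v ⟨v.1 + 1, h1⟩ rfl
      exact no4 v ⟨v.1 - 1, by omega⟩ ⟨v.1 + 1, h1⟩ c d a1' a2 hfc hfd
        (fne _ _ (show v.1 - 1 ≠ v.1 + 1 by omega)) (fne _ _ (show v.1 - 1 ≠ c.1 by omega))
        (fne _ _ (show v.1 - 1 ≠ d.1 by omega)) (fne _ _ (show v.1 + 1 ≠ c.1 by omega))
        (fne _ _ (show v.1 + 1 ≠ d.1 by omega)) hcd
    rcases hp5 with h5 | h5 <;> rcases hq5 with h6 | h6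
    · have l1 : v.1 + 2 ≤ p.2.1 := by have := congrArg Fin.val h5; omega
      have l2 : v.1 + 2 ≤ q.2.1 := by have := congrArg Fin.val h6; omega
      have hcd : p.2 ≠ q.2 := fun e => hne (Prod.ext (h5.trans h6.symm) e)
      rw [h5] at hp4
      rw [h6] at hq4
      exact main p.2 q.2 (Or.inl l1) (Or.inl l2) hcd hp4 hq4
    · have l1 : v.1 + 2 ≤ p.2.1 := by have := congrArg Fin.val h5; omega
      have l2 : q.1.1 + 2 ≤ v.1 := by have := congrArg Fin.val h6; omega
      rw [h5] at hp4
      rw [h6] at hq4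
      exact main p.2 q.1 (Or.inl l1) (Or.inr l2) (fne _ _ (by omega)) hp4 (hexAdj_symm hq4)
    · have l1 : p.1.1 + 2 ≤ v.1 := by have := congrArg Fin.val h5; omega
      have l2 : v.1 + 2 ≤ q.2.1 := by have := congrArg Fin.val h6; omega
      rw [h5] at hp4
      rw [h6] at hq4
      exact main p.1 q.2 (Or.inr l1) (Or.inl l2) (fne _ _ (by omega)) (hexAdj_symm hp4) hq4
    · have l1 : p.1.1 + 2 ≤ v.1 := by have := congrArg Fin.val h5; omega
      have l2 : q.1.1 + 2 ≤ v.1 := by have := congrArg Fin.val h6; omega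
      have hcd : p.1 ≠ q.1 := fun e => hne (Prod.ext e (h5.trans h6.symm))
      rw [h5] at hp4
      rw [h6] at hq4
      exact main p.1 q.1 (Or.inr l1) (Or.inr l2) hcd (hexAdj_symm hp4) (hexAdj_symm hq4)
  have hdeg0 : ∀ v : Fin (wk k).length, v.1 = 0 →
      (T.filter fun p => p.1 = v ∨ p.2 = v).card ≤ 2 := by
    intro v hv
    by_contra hgt
    push_neg at hgt
    obtain ⟨p, hp, q, hq, r, hr, hpq, hpr, hqr⟩ := Finset.two_lt_card.mp hgt
    rw [Finset.mem_filter, hmemT] at hp hq hr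
    obtain ⟨⟨hp1, _, _, hp4⟩, hp5⟩ := hp
    obtain ⟨⟨hq1, _, _, hq4⟩, hq5⟩ := hq
    obtain ⟨⟨hr1, _, _, hr4⟩, hr5⟩ := hr
    have hp5' : p.1 = v := by
      rcases hp5 with h | h
      · exact h
      · exfalso; have := congrArg Fin.val h; omega
    have hq5' : q.1 = v := by
      rcases hq5 with h | h
      · exact h
      · exfalso; have := congrArg Fin.val h; omega
    have hr5' : r.1 = v := by
      rcases hr5 with h | h
      · exact h
      · exfalso; have := congrArg Fin.val h; omega
    rw [hp5'] at hp4
    rw [hq5'] at hq4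
    rw [hr5'] at hr4
    have l1 : v.1 + 2 ≤ p.2.1 := by have := congrArg Fin.val hp5'; omega
    have l2 : v.1 + 2 ≤ q.2.1 := by have := congrArg Fin.val hq5'; omega
    have l3 : v.1 + 2 ≤ r.2.1 := by have := congrArg Fin.val hr5'; omega
    have hone : hexAdj (F v) (F ⟨1, by omega⟩) :=
      chainF v ⟨1, by omega⟩ (show v.1 + 1 = 1 by omega)
    have d1 : p.2 ≠ q.2 := fun e => hpq (Prod.ext (hp5'.trans hq5'.symm) e)
    have d2 : p.2 ≠ r.2 := fun e => hpr (Prod.ext (hp5'.trans hr5'.symm) e)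
    have d3 : q.2 ≠ r.2 := fun e => hqr (Prod.ext (hq5'.trans hr5'.symm) e)
    exact no4 v ⟨1, by omega⟩ p.2 q.2 r.2 hone hp4 hq4 hr4
      (fne _ _ (show (1:ℕ) ≠ p.2.1 by omega)) (fne _ _ (show (1:ℕ) ≠ q.2.1 by omega))
      (fne _ _ (show (1:ℕ) ≠ r.2.1 by omega)) d1 d2 d3
  have hdegN : ∀ v : Fin (wk k).length, v.1 + 1 = (wk k).length →
      (T.filter fun p => p.1 = v ∨ p.2 = v).card ≤ 2 := by
    intro v hv
    by_contra hgt
    push_neg at hgt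
    obtain ⟨p, hp, q, hq, r, hr, hpq, hpr, hqr⟩ := Finset.two_lt_card.mp hgt
    rw [Finset.mem_filter, hmemT] at hp hq hr
    obtain ⟨⟨hp1, _, _, hp4⟩, hp5⟩ := hp
    obtain ⟨⟨hq1, _, _, hq4⟩, hq5⟩ := hq
    obtain ⟨⟨hr1, _, _, hr4⟩, hr5⟩ := hr
    have hp5' : p.2 = v := by
      rcases hp5 with h | h
      · exfalso; have := congrArg Fin.val h; have := p.2.2; omega
      · exact h
    have hq5' : q.2 = v := by
      rcases hq5 with h | h
      · exfalso; have := congrArg Fin.val h; have := q.2.2; omega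
      · exact h
    have hr5' : r.2 = v := by
      rcases hr5 with h | h
      · exfalso; have := congrArg Fin.val h; have := r.2.2; omega
      · exact h
    rw [hp5'] at hp4
    rw [hq5'] at hq4
    rw [hr5'] at hr4
    have l1 : p.1.1 + 2 ≤ v.1 := by have := congrArg Fin.val hp5'; omega
    have l2 : q.1.1 + 2 ≤ v.1 := by have := congrArg Fin.val hq5'; omega
    have l3 : r.1.1 + 2 ≤ v.1 := by have := congrArg Fin.val hr5'; omega
    have hone : hexAdj (F v) (F ⟨v.1 - 1, by omega⟩) :=
      hexAdj_symm (chainF ⟨v.1 - 1, by omega⟩ v (show v.1 - 1 + 1 = v.1 by omega))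
    have d1 : p.1 ≠ q.1 := fun e => hpq (Prod.ext e (hp5'.trans hq5'.symm))
    have d2 : p.1 ≠ r.1 := fun e => hpr (Prod.ext e (hp5'.trans hr5'.symm))
    have d3 : q.1 ≠ r.1 := fun e => hqr (Prod.ext e (hq5'.trans hr5'.symm))
    exact no4 v ⟨v.1 - 1, by omega⟩ p.1 q.1 r.1 hone (hexAdj_symm hp4) (hexAdj_symm hq4)
      (hexAdj_symm hr4)
      (fne _ _ (show v.1 - 1 ≠ p.1.1 by omega)) (fne _ _ (show v.1 - 1 ≠ q.1.1 by omega))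
      (fne _ _ (show v.1 - 1 ≠ r.1.1 by omega)) d1 d2 d3
  have hdc : ∑ v : Fin (wk k).length, (T.filter fun p => p.1 = v ∨ p.2 = v).card = 2 * T.card := by
    calc ∑ v : Fin (wk k).length, (T.filter fun p => p.1 = v ∨ p.2 = v).card
        = ∑ v : Fin (wk k).length, ∑ p ∈ T, if p.1 = v ∨ p.2 = v then 1 else 0 :=
          Finset.sum_congr rfl fun v _ => Finset.card_filter _ _
      _ = ∑ p ∈ T, ∑ v : Fin (wk k).length, if p.1 = v ∨ p.2 = v then 1 else 0 :=
          Finset.sum_comm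
      _ = ∑ p ∈ T, 2 := by
          apply Finset.sum_congr rfl
          intro p hp
          rw [hmemT] at hp
          have hne : p.1 ≠ p.2 := fne _ _ (by omega)
          rw [← Finset.card_filter]
          have e : (Finset.univ.filter fun v => p.1 = v ∨ p.2 = v) = {p.1, p.2} := by
            ext v
            simp only [Finset.mem_filter, Finset.mem_univ, true_and, Finset.mem_insert,
              Finset.mem_singleton]
            constructor
            · rintro (h | h)
              exacts [Or.inl h.symm, Or.inr h.symm]
            · rintro (h | h)
              exacts [Or.inl h.symm, Or.inr h.symm]
          rw [e, Finset.card_pair hne]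
      _ = 2 * T.card := by rw [Finset.sum_const, smul_eq_mul, Nat.mul_comm]
  have htrue : ∀ v : Fin (wk k).length, ¬ ((wk k).get v = false) →
      (T.filter fun p => p.1 = v ∨ p.2 = v).card = 0 := by
    intro v hv
    rw [Finset.card_eq_zero, Finset.filter_eq_empty_iff]
    intro p hp
    rw [hmemT] at hp
    rintro (e | e)
    · exact hv (e ▸ hp.2.1)
    · exact hv (e ▸ hp.2.2.1)
  have hmain : 2 * T.card ≤ 2 * k + 4 := by
    rw [← hdc]
    rw [← Finset.sum_subset
      (Finset.filter_subset (fun v : Fin (wk k).length => (wk k).get v = false) Finset.univ)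
      (fun x _ hx => htrue x (by simpa using hx))]
    set Z := Finset.univ.filter fun v : Fin (wk k).length => (wk k).get v = false with hZ
    have hZcard : Z.card = 2 * k + 2 := by rw [hZ, card_filter_count, wk_count]
    calc ∑ v ∈ Z, (T.filter fun p => p.1 = v ∨ p.2 = v).card
        ≤ ∑ v ∈ Z, (if v.1 = 0 ∨ v.1 + 1 = (wk k).length then 2 else 1) := by
          apply Finset.sum_le_sum
          intro v _
          split_ifs with hc
          · rcases hc with h | h
            · exact hdeg0 v h
            · exact hdegN v h
          · push_neg at hc
            obtain ⟨hc1, hc2⟩ := hc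
            exact le_trans (hdeg_int v (by omega) (by have := v.2; omega)) (by omega)
      _ = ∑ v ∈ Z, 1 + ∑ v ∈ Z, (if v.1 = 0 ∨ v.1 + 1 = (wk k).length then 1 else 0) := by
          rw [← Finset.sum_add_distrib]
          apply Finset.sum_congr rfl
          intro v _
          split_ifs <;> omega
      _ ≤ (2 * k + 2) + 2 := by
          apply Nat.add_le_add
          · rw [Finset.sum_const, smul_eq_mul, Nat.mul_one, hZcard]
          · rw [← Finset.card_filter]
            have hsub : (Z.filter fun v => v.1 = 0 ∨ v.1 + 1 = (wk k).length) ⊆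
                ({⟨0, by omega⟩, ⟨4*k+9, by omega⟩} : Finset (Fin (wk k).length)) := by
              intro v hv
              rw [Finset.mem_filter] at hv
              rcases hv.2 with h | h
              · exact Finset.mem_insert.mpr (Or.inl (Fin.ext (by simp [h])))
              · refine Finset.mem_insert.mpr (Or.inr ?_)
                rw [Finset.mem_singleton]
                exact Fin.ext (by simp; omega)
            exact le_trans (Finset.card_le_card hsub) Finset.card_le_two
  omega

/-- For each `k ≥ 1`, the word `w_k = 0 1^4 011 (01)^k 11 (10)^k` has `2k+2` zeros and its
optimal hexagonal-lattice score is exactly `Z(w_k)/2 + 1 = k + 2`. -/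
theorem stmt11 (k : ℕ) (hk : 1 ≤ k) :
    let w : List Bool :=
      [false] ++ List.replicate 4 true ++ [false, true, true] ++
        (List.replicate k [false, true]).flatten ++ [true, true] ++
        (List.replicate k [true, false]).flatten
    w.count false = 2 * k + 2 ∧ J hexAdj w = k + 2 := by
  intro w
  show (wk k).count false = 2 * k + 2 ∧ J hexAdj (wk k) = k + 2
  refine ⟨wk_count k, ?_⟩
  have hub : ∀ s ∈ {s | ∃ F, IsFold hexAdj (wk k) F ∧ score hexAdj (wk k) F = s}, s ≤ k + 2 := by
    rintro s ⟨F, hF, rfl⟩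
    exact wk_upper k F hF
  obtain ⟨F0, hF0, hsc0⟩ := wk_lower k hk
  have hmem : score hexAdj (wk k) F0 ∈ {s | ∃ F, IsFold hexAdj (wk k) F ∧ score hexAdj (wk k) F = s} :=
    ⟨F0, hF0, rfl⟩
  have heq : score hexAdj (wk k) F0 = k + 2 := le_antisymm (wk_upper k F0 hF0) hsc0
  rw [J]
  apply le_antisymm
  · exact csSup_le ⟨_, hmem⟩ hub
  · rw [← heq]
    exact le_csSup ⟨k + 2, fun s hs => hub s hs⟩ hmem
end
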